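/- arXiv:1509.08525 — 3 statements merged into one kernel-verified Lean document; each statement's English description precedes it below -/
import Mathlib

section
/- Let s(λ) be a 2×2 unitary matrix of the form s_{ab} = δ_{ab} + 2i G √(m_a m_b) for nonnegative reals m_l, m_r and a complex number G. Then |s_{ll}|² = 1 - 4 m_l m_r |G|², so s is off-diagonal (|s_{ll}| = 0) iff 4 m_l m_r |G|² = 1. -/
open Complex

theorem Matrix.sum_norm_sq_row_of_mem_unitaryGroup {𝕜 n : Type*} [RCLike 𝕜] [Fintype n]
    [DecidableEq n] {U : Matrix n n 𝕜} (hU : U ∈ Matrix.unitaryGroup n 𝕜) (i : n) :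
    ∑ j, ‖U i j‖ ^ 2 = 1 := by
  have hii : (U * star U) i i = 1 := by
    rw [Matrix.mem_unitaryGroup_iff.mp hU, Matrix.one_apply_eq]
  simp only [Matrix.mul_apply, Matrix.star_apply, RCLike.star_def, RCLike.mul_conj] at hii
  exact_mod_cast hii

theorem Complex.norm_sq_two_I_mul_mul_sqrt (G : ℂ) {a b : ℝ} (hab : 0 ≤ a * b) :
    ‖2 * I * G * (Real.sqrt (a * b) : ℂ)‖ ^ 2 = 4 * a * b * ‖G‖ ^ 2 := by
  simp only [norm_mul, Complex.norm_two, norm_I, norm_real, Real.norm_eq_abs,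
    abs_of_nonneg (Real.sqrt_nonneg _), mul_pow, Real.sq_sqrt hab]
  ring

/-- Let `s` be the 2×2 matrix with entries `s a b = δ_{ab} + 2i G √(m a · m b)`, where
`m 0 = ml ≥ 0`, `m 1 = mr ≥ 0` and `G ∈ ℂ`, and assume `s` is unitary.  Then
`|s_{ll}|² = 1 - 4 ml mr |G|²`; in particular `s` is off-diagonal (`|s_{ll}| = 0`)
iff `4 ml mr |G|² = 1`. -/
theorem scattering_diag_abs_sq
    (ml mr : ℝ) (hml : 0 ≤ ml) (hmr : 0 ≤ mr) (G : ℂ)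
    (s : Matrix (Fin 2) (Fin 2) ℂ)
    (hs_def : ∀ a b : Fin 2,
      s a b = (if a = b then 1 else 0) +
        2 * Complex.I * G * (Real.sqrt ((![ml, mr] a) * (![ml, mr] b)) : ℝ))
    (hs : s ∈ Matrix.unitaryGroup (Fin 2) ℂ) :
    ‖s 0 0‖ ^ 2 = 1 - 4 * ml * mr * ‖G‖ ^ 2 ∧
      (‖s 0 0‖ = 0 ↔ 4 * ml * mr * ‖G‖ ^ 2 = 1) := by
  have hrow : ‖s 0 0‖ ^ 2 + ‖s 0 1‖ ^ 2 = 1 := by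
    simpa [Fin.sum_univ_two] using Matrix.sum_norm_sq_row_of_mem_unitaryGroup hs 0
  have hoff : ‖s 0 1‖ ^ 2 = 4 * ml * mr * ‖G‖ ^ 2 := by
    simpa [hs_def] using norm_sq_two_I_mul_mul_sqrt G (mul_nonneg hml hmr)
  have hdiag : ‖s 0 0‖ ^ 2 = 1 - 4 * ml * mr * ‖G‖ ^ 2 := by linarith
  refine ⟨hdiag, ?_⟩
  rw [← sq_eq_zero_iff, hdiag, sub_eq_zero, eq_comm]
end

section
/- Suppose the 2×2 matrix with entries s_{ab} = δ_{ab} + 2iG√(m_a m_b), where m_l, m_r > 0 and G ∈ ℂ, is unitary. Then Im G = |G|²(m_l + m_r). -/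
/-!
With `v = (√m_l, √m_r)` the matrix is `s = 1 + 2iG v vᵀ`. Since `(v vᵀ)² = ‖v‖² v vᵀ`,
one gets `s s† = 1 + (4|G|²‖v‖² - 4 Im G) v vᵀ`, so unitarity forces the coefficient to
vanish, and `‖v‖² = m_l + m_r`.
-/

open Complex Matrix

theorem one_add_smul_vecMulVec_mul_conjTranspose {n α : Type*} [Fintype n] [DecidableEq n]
    [CommRing α] [StarRing α] (w : n → α) (hw : star w = w) (c : α) :
    (1 + c • vecMulVec w w) * (1 + c • vecMulVec w w)ᴴ =
      1 + (c + star c + c * star c * (w ⬝ᵥ w)) • vecMulVec w w := by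
  simp only [conjTranspose_add, conjTranspose_one, conjTranspose_smul, conjTranspose_vecMulVec, hw,
    add_mul, mul_add, one_mul, mul_one, smul_mul_smul_comm, vecMulVec_mul_vecMulVec, vecMulVec_smul]
  module

theorem im_eq_norm_sq_mul_sum_sq_of_one_add_smul_vecMulVec_mem_unitaryGroup
    {n : Type*} [Fintype n] [DecidableEq n] {v : n → ℝ} (hv : v ≠ 0) (G : ℂ)
    (h : 1 + (2 * I * G) • vecMulVec (fun i ↦ (v i : ℂ)) (fun i ↦ (v i : ℂ)) ∈
      unitaryGroup n ℂ) :
    G.im = ‖G‖ ^ 2 * ∑ i, v i ^ 2 := by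
  set w : n → ℂ := fun i ↦ (v i : ℂ)
  set c := 2 * I * G
  have hw : star w = w := funext fun i ↦ conj_ofReal (v i)
  have hP : (c + star c + c * star c * (w ⬝ᵥ w)) • vecMulVec w w = 0 := by
    rw [← add_eq_left (a := 1), ← one_add_smul_vecMulVec_mul_conjTranspose w hw]
    exact mem_unitaryGroup_iff.mp h
  obtain ⟨i, hi⟩ : ∃ i, v i ≠ 0 := Function.ne_iff.mp hv
  have hcoef : c + star c + c * star c * (w ⬝ᵥ w) = 0 := by
    have hPii := congrFun (congrFun hP i) i
    rw [Matrix.smul_apply, vecMulVec_apply, smul_eq_mul, Matrix.zero_apply] at hPii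
    exact (mul_eq_zero.mp hPii).resolve_right (by simpa [w] using hi)
  have hdot : w ⬝ᵥ w = ((∑ i, v i ^ 2 : ℝ) : ℂ) := by simp [w, dotProduct, sq]
  have hc_re : c.re = -2 * G.im := by simp [c]
  have hc_normSq : normSq c = 4 * normSq G := by norm_num [c, normSq_mul]
  rw [RCLike.star_def, add_conj, mul_conj, hdot] at hcoef
  norm_cast at hcoef
  rw [hc_re, hc_normSq] at hcoef
  rw [Complex.sq_norm]
  linarith

/-- If the 2×2 matrix with entries `s a b = δ_{ab} + 2i G √(m a · m b)`, where
`m 0 = ml > 0`, `m 1 = mr > 0` and `G ∈ ℂ`, is unitary, then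
`Im G = |G|² (ml + mr)`. -/
theorem scattering_unitarity_imG
    (ml mr : ℝ) (hml : 0 < ml) (hmr : 0 < mr) (G : ℂ)
    (s : Matrix (Fin 2) (Fin 2) ℂ)
    (hs_def : ∀ a b : Fin 2,
      s a b = (if a = b then 1 else 0) +
        2 * Complex.I * G * (Real.sqrt ((![ml, mr] a) * (![ml, mr] b)) : ℝ))
    (hs : s ∈ Matrix.unitaryGroup (Fin 2) ℂ) :
    G.im = ‖G‖ ^ 2 * (ml + mr) := by
  set m : Fin 2 → ℝ := ![ml, mr]
  have hm : ∀ a, 0 ≤ m a := Fin.forall_fin_two.mpr ⟨hml.le, hmr.le⟩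
  set v : Fin 2 → ℝ := fun a ↦ √(m a)
  have hv : v ≠ 0 := Function.ne_iff.mpr ⟨0, Real.sqrt_ne_zero'.mpr hml⟩
  have hs_eq : s = 1 + (2 * I * G) • vecMulVec (fun a ↦ (v a : ℂ)) (fun a ↦ (v a : ℂ)) := by
    ext a b
    rw [hs_def, Real.sqrt_mul (hm a), Matrix.add_apply, one_apply, Matrix.smul_apply,
      vecMulVec_apply, smul_eq_mul, ofReal_mul, mul_assoc]
  have hsum : ∑ a, v a ^ 2 = ml + mr := by
    simp [v, m, Real.sq_sqrt, hml.le, hmr.le]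
  rw [← hsum]
  exact im_eq_norm_sq_mul_sum_sq_of_one_add_smul_vecMulVec_mem_unitaryGroup hv G (hs_eq ▸ hs)
end

section
/- Let h : ℝ → ℂ be a bounded continuously differentiable function such that lim_{t→∞} h(t) = L₊ and lim_{t→-∞} h(t) = L₋ exist, and h' is bounded. Then lim_{ε↓0} ∫_ℝ e^{-ε|t|} h'(t) dt = L₊ - L₋. -/
open MeasureTheory Filter Set Topology

/-! Split the integral at `0` and reflect the negative half-line: it then suffices to show
`∫_{t>0} e^{-εt} h'(t) dt → L - h 0` when `h → L` at `+∞`. Integrating by parts, the left side is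
`ε ∫_{t>0} e^{-εt} h(t) dt - h 0`, and the substitution `u = εt` rewrites
`ε ∫_{t>0} e^{-εt} h(t) dt` as `∫_{u>0} e^{-u} h(u/ε) du`, which tends to `L` by dominated
convergence because `h(u/ε) → L` for every `u > 0`. -/

section
variable {E : Type*} [NormedAddCommGroup E] [NormedSpace ℝ E]

theorem integrable_exp_neg_mul_abs {ε : ℝ} (hε : 0 < ε) :
    Integrable fun t : ℝ => Real.exp (-ε * |t|) := by
  rw [← integrableOn_univ, ← Iic_union_Ioi (a := (0 : ℝ)), integrableOn_union]
  constructor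
  · refine (integrableOn_exp_mul_Iic hε 0).congr_fun (fun t ht => ?_) measurableSet_Iic
    rw [abs_of_nonpos ht, neg_mul_neg]
  · refine (exp_neg_integrableOn_Ioi 0 hε).congr_fun (fun t ht => ?_) measurableSet_Ioi
    rw [abs_of_pos ht]

theorem integral_eq_integral_Ioi_add_integral_Ioi_comp_neg {g : ℝ → E} (hg : Integrable g) :
    ∫ t, g t = (∫ t in Ioi 0, g t) + ∫ t in Ioi 0, g (-t) := by
  rw [integral_comp_neg_Ioi, neg_zero, add_comm (∫ t in Ioi 0, g t),
    intervalIntegral.integral_Iic_add_Ioi hg.integrableOn hg.integrableOn]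

theorem tendsto_smul_integral_Ioi_exp_neg_mul_smul [CompleteSpace E] {f : ℝ → E}
    (hf : StronglyMeasurable f) {C : ℝ} (hC : ∀ t, ‖f t‖ ≤ C) {L : E} (hL : Tendsto f atTop (𝓝 L)) :
    Tendsto (fun ε : ℝ => ε • ∫ t in Ioi 0, Real.exp (-ε * t) • f t) (𝓝[>] 0) (𝓝 L) := by
  have rescale : ∀ ε > (0 : ℝ), ∫ u in Ioi 0, Real.exp (-u) • f (u / ε) =
      ε • ∫ t in Ioi 0, Real.exp (-ε * t) • f t := fun ε hε => by
    simpa [mul_div_cancel_left₀ _ hε.ne'] using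
      (integral_comp_mul_left_Ioi' (fun u => Real.exp (-u) • f (u / ε)) 0 hε).symm
  have limit : Tendsto (fun ε : ℝ => ∫ u in Ioi 0, Real.exp (-u) • f (u / ε)) (𝓝[>] 0)
      (𝓝 (∫ u in Ioi 0, Real.exp (-u) • L)) := by
    refine tendsto_integral_filter_of_dominated_convergence (fun u => C * Real.exp (-u))
      (Eventually.of_forall fun ε => ?_) (Eventually.of_forall fun ε => ?_)
      ((integrableOn_exp_neg_Ioi 0).const_mul C) ?_
    · exact ((Real.continuous_exp.comp continuous_neg).stronglyMeasurable.smul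
        (hf.comp_measurable (measurable_id.div_const ε))).aestronglyMeasurable
    · refine Eventually.of_forall fun u => ?_
      rw [norm_smul, Real.norm_of_nonneg (Real.exp_pos _).le, mul_comm]
      exact mul_le_mul_of_nonneg_right (hC _) (Real.exp_pos _).le
    · filter_upwards [ae_restrict_mem measurableSet_Ioi] with u (hu : 0 < u)
      refine tendsto_const_nhds.smul (hL.comp ?_)
      exact (tendsto_inv_nhdsGT_zero.const_mul_atTop hu).congr fun ε =>
        (div_eq_mul_inv u ε).symm
  rw [integral_smul_const, integral_exp_neg_Ioi_zero, one_smul] at limit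
  exact limit.congr' (eventually_nhdsWithin_of_forall rescale)

theorem integral_Ioi_exp_neg_mul_smul_deriv [CompleteSpace E] {f : ℝ → E}
    (hf : Differentiable ℝ f) {C C' : ℝ} (hC : ∀ t, ‖f t‖ ≤ C) (hC' : ∀ t, ‖deriv f t‖ ≤ C')
    {ε : ℝ} (hε : 0 < ε) :
    ∫ t in Ioi 0, Real.exp (-ε * t) • deriv f t =
      ε • (∫ t in Ioi 0, Real.exp (-ε * t) • f t) - f 0 := by
  have hexp := exp_neg_integrableOn_Ioi 0 hε
  have int_f : IntegrableOn (fun t => Real.exp (-ε * t) • f t) (Ioi 0) :=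
    hexp.smul_bdd C hf.continuous.aestronglyMeasurable (Eventually.of_forall hC)
  have int_f' : IntegrableOn (fun t => Real.exp (-ε * t) • deriv f t) (Ioi 0) :=
    hexp.smul_bdd C' (stronglyMeasurable_deriv f).aestronglyMeasurable (Eventually.of_forall hC')
  have hderiv : ∀ t ∈ Ici (0 : ℝ), HasDerivAt (fun t => Real.exp (-ε * t) • f t)
      (Real.exp (-ε * t) • deriv f t - ε • Real.exp (-ε * t) • f t) t := by
    intro t _
    convert (((hasDerivAt_id t).const_mul (-ε)).exp).smul (hf t).hasDerivAt using 1
    · rfl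
    · simp only [id, mul_one]
      module
  have decay : Tendsto (fun t => Real.exp (-ε * t) • f t) atTop (𝓝 0) :=
    (Real.tendsto_exp_atBot.comp (tendsto_id.const_mul_atTop_of_neg (neg_lt_zero.2 hε))
      ).zero_smul_isBoundedUnder_le ⟨C, eventually_map.2 (Eventually.of_forall hC)⟩
  have ftc := integral_Ioi_of_hasDerivAt_of_tendsto' hderiv (int_f'.sub (int_f.smul ε)) decay
  have int_εf : IntegrableOn (fun t => ε • Real.exp (-ε * t) • f t) (Ioi 0) := int_f.smul ε
  rw [integral_sub int_f' int_εf, integral_smul, mul_zero, Real.exp_zero, one_smul,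
    zero_sub, sub_eq_iff_eq_add] at ftc
  rw [ftc]
  abel

theorem tendsto_integral_Ioi_exp_neg_mul_smul_deriv [CompleteSpace E] {f : ℝ → E}
    (hf : Differentiable ℝ f) {C C' : ℝ} (hC : ∀ t, ‖f t‖ ≤ C) (hC' : ∀ t, ‖deriv f t‖ ≤ C')
    {L : E} (hL : Tendsto f atTop (𝓝 L)) :
    Tendsto (fun ε : ℝ => ∫ t in Ioi 0, Real.exp (-ε * t) • deriv f t) (𝓝[>] 0)
      (𝓝 (L - f 0)) :=
  ((tendsto_smul_integral_Ioi_exp_neg_mul_smul hf.continuous.stronglyMeasurable hC hL).sub_const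
    (f 0)).congr' (eventually_nhdsWithin_of_forall fun _ hε =>
      (integral_Ioi_exp_neg_mul_smul_deriv hf hC hC' hε).symm)

theorem integral_exp_neg_mul_abs_smul_deriv [CompleteSpace E] {f : ℝ → E} {C' : ℝ}
    (hC' : ∀ t, ‖deriv f t‖ ≤ C') {ε : ℝ} (hε : 0 < ε) :
    ∫ t, Real.exp (-ε * |t|) • deriv f t =
      (∫ t in Ioi 0, Real.exp (-ε * t) • deriv f t) -
        ∫ t in Ioi 0, Real.exp (-ε * t) • deriv (fun s => f (-s)) t := by
  have hint : Integrable fun t => Real.exp (-ε * |t|) • deriv f t :=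
    (integrable_exp_neg_mul_abs hε).smul_bdd C' (stronglyMeasurable_deriv f).aestronglyMeasurable
      (Eventually.of_forall hC')
  rw [integral_eq_integral_Ioi_add_integral_Ioi_comp_neg hint, sub_eq_add_neg,
    ← integral_neg]
  congr 1 <;> refine setIntegral_congr_fun measurableSet_Ioi fun t (ht : 0 < t) => ?_
  · simp [abs_of_pos ht]
  · simp [deriv_comp_neg, abs_of_pos ht]

end

/-- Abelian theorem: if `h : ℝ → ℂ` is `C¹` with `h` and `h'` bounded and
`h(t) → L₊` as `t → ∞`, `h(t) → L₋` as `t → -∞`, then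
`∫ℝ e^{-ε|t|} h'(t) dt → L₊ - L₋` as `ε ↓ 0`. -/
theorem abel_limit_derivative
    (h : ℝ → ℂ) (hh : ContDiff ℝ 1 h)
    (hb : ∃ M : ℝ, ∀ t : ℝ, ‖h t‖ ≤ M)
    (hb' : ∃ M' : ℝ, ∀ t : ℝ, ‖deriv h t‖ ≤ M')
    (Lp Lm : ℂ)
    (hLp : Tendsto h atTop (nhds Lp)) (hLm : Tendsto h atBot (nhds Lm)) :
    Tendsto (fun ε : ℝ => ∫ t : ℝ, Real.exp (-ε * |t|) • deriv h t)
      (nhdsWithin 0 (Set.Ioi 0)) (nhds (Lp - Lm)) := by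
  obtain ⟨M, hM⟩ := hb
  obtain ⟨M', hM'⟩ := hb'
  have hd : Differentiable ℝ h := hh.differentiable one_ne_zero
  have right := tendsto_integral_Ioi_exp_neg_mul_smul_deriv hd hM hM' hLp
  have left := tendsto_integral_Ioi_exp_neg_mul_smul_deriv (f := fun s => h (-s))
    (hd.comp differentiable_neg) (fun t => hM (-t))
    (fun t => by rw [deriv_comp_neg, norm_neg]; exact hM' (-t)) (hLm.comp tendsto_neg_atTop_atBot)
  have limit := right.sub left
  rw [neg_zero, sub_sub_sub_cancel_right] at limit
  exact limit.congr' (eventually_nhdsWithin_of_forall fun ε hε =>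
    (integral_exp_neg_mul_abs_smul_deriv hM' hε).symm)
end
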